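/- Let L ≥ 1 and let (A_l)_{l=1}^L and (B_l)_{l=1}^L be finite persistence diagrams, one pair per layer of a multilayer network, and let c_1, …, c_L ≥ 0 satisfy W∞(A_l, B_l) ≤ c_l for every l. Then the bottleneck distance between the stacked persistence diagrams satisfies W∞(A₁ + ⋯ + A_L, B₁ + ⋯ + B_L) ≤ max_{1 ≤ l ≤ L} c_l. In particular, W∞(A₁ + ⋯ + A_L, B₁ + ⋯ + B_L) ≤ max_{1 ≤ l ≤ L} W∞(A_l, B_l). -/

import Mathlib

/-- Orthogonal projection of a point of `ℝ²` onto the diagonal. -/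
noncomputable def diagProj (p : ℝ × ℝ) : ℝ × ℝ := ((p.1 + p.2) / 2, (p.1 + p.2) / 2)

/-- The bottleneck distance between two finite multisets `A`, `B` of points of `ℝ²`:
the infimum over multiset bijections `σ` from `A + π(B)` to `B + π(A)` (encoded as a
multiset `M` of pairs whose first components form `A + π(B)` and whose second components
form `B + π(A)`) of the maximum sup-norm displacement `‖p - σ(p)‖_∞` (taken to be `0`
when both augmented multisets are empty).  Note that `dist` on `ℝ × ℝ` is the sup-norm
distance. -/
noncomputable def bottleneck (A B : Multiset (ℝ × ℝ)) : ℝ :=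
  sInf { c : ℝ | ∃ M : Multiset ((ℝ × ℝ) × (ℝ × ℝ)),
      M.map Prod.fst = A + B.map diagProj ∧
      M.map Prod.snd = B + A.map diagProj ∧
      c = (M.map fun q => dist q.1 q.2).fold max 0 }

/-!
Choose, in every layer, a matching of `A l + π(B l)` with `B l + π(A l)` whose cost is within
`ε` of `W∞(A l, B l)`. Since `π` commutes with multiset sums, the sum of these matchings is a
matching for the stacked diagrams, and the cost of a sum of matchings is the maximum of their
costs.
-/

def IsDiagMatching (A B : Multiset (ℝ × ℝ)) (M : Multiset ((ℝ × ℝ) × (ℝ × ℝ))) : Prop :=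
  M.map Prod.fst = A + B.map diagProj ∧ M.map Prod.snd = B + A.map diagProj

noncomputable def matchingCost (M : Multiset ((ℝ × ℝ) × (ℝ × ℝ))) : ℝ :=
  (M.map fun q => dist q.1 q.2).fold max 0

section Matching

variable {A B A' B' : Multiset (ℝ × ℝ)} {M N : Multiset ((ℝ × ℝ) × (ℝ × ℝ))}

lemma bottleneck_eq_sInf_image (A B : Multiset (ℝ × ℝ)) :
    bottleneck A B = sInf (matchingCost '' {M | IsDiagMatching A B M}) := by
  unfold bottleneck
  congr 1
  ext c
  simp [IsDiagMatching, matchingCost, eq_comm, and_assoc]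

@[simp]
lemma matchingCost_zero : matchingCost 0 = 0 := rfl

lemma matchingCost_add (M N : Multiset ((ℝ × ℝ) × (ℝ × ℝ))) :
    matchingCost (M + N) = max (matchingCost M) (matchingCost N) := by
  rw [matchingCost, Multiset.map_add, ← max_self (0 : ℝ), Multiset.fold_add]
  rfl

lemma matchingCost_nonneg (M : Multiset ((ℝ × ℝ) × (ℝ × ℝ))) : 0 ≤ matchingCost M := by
  induction M using Multiset.induction with
  | empty => simp
  | cons q M ih =>
    rw [← Multiset.singleton_add, matchingCost_add]
    exact le_max_of_le_right ih

lemma isDiagMatching_zero : IsDiagMatching 0 0 0 := by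
  simp [IsDiagMatching]

lemma IsDiagMatching.add (hM : IsDiagMatching A B M) (hN : IsDiagMatching A' B' N) :
    IsDiagMatching (A + A') (B + B') (M + N) := by
  obtain ⟨hM₁, hM₂⟩ := hM
  obtain ⟨hN₁, hN₂⟩ := hN
  constructor <;> simp only [Multiset.map_add, *] <;> abel

/-- Zip enumerations of the two sides, which both have cardinality `#A + #B`. -/
lemma exists_isDiagMatching (A B : Multiset (ℝ × ℝ)) : ∃ M, IsDiagMatching A B M := by
  set X := A + B.map diagProj
  set Y := B + A.map diagProj
  have hlen : X.toList.length = Y.toList.length := by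
    simp [X, Y, Multiset.length_toList, add_comm]
  refine ⟨(X.toList.zip Y.toList : List _), ?_, ?_⟩
  · rw [Multiset.map_coe, List.map_fst_zip hlen.le, Multiset.coe_toList]
  · rw [Multiset.map_coe, List.map_snd_zip hlen.ge, Multiset.coe_toList]

lemma bddBelow_matchingCost_image (A B : Multiset (ℝ × ℝ)) :
    BddBelow (matchingCost '' {M | IsDiagMatching A B M}) :=
  ⟨0, Set.forall_mem_image.2 fun M _ => matchingCost_nonneg M⟩

lemma bottleneck_nonneg (A B : Multiset (ℝ × ℝ)) : 0 ≤ bottleneck A B := by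
  rw [bottleneck_eq_sInf_image]
  exact Real.sInf_nonneg (Set.forall_mem_image.2 fun M _ => matchingCost_nonneg M)

lemma IsDiagMatching.bottleneck_le (hM : IsDiagMatching A B M) :
    bottleneck A B ≤ matchingCost M := by
  rw [bottleneck_eq_sInf_image]
  exact csInf_le (bddBelow_matchingCost_image A B) ⟨M, hM, rfl⟩

lemma exists_isDiagMatching_matchingCost_lt {x : ℝ} (h : bottleneck A B < x) :
    ∃ M, IsDiagMatching A B M ∧ matchingCost M < x := by
  rw [bottleneck_eq_sInf_image] at h
  obtain ⟨_, ⟨M, hM, rfl⟩, hlt⟩ :=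
    exists_lt_of_csInf_lt (Set.Nonempty.image matchingCost (exists_isDiagMatching A B)) h
  exact ⟨M, hM, hlt⟩

end Matching

@[simp]
lemma bottleneck_zero_zero : bottleneck 0 0 = 0 :=
  le_antisymm isDiagMatching_zero.bottleneck_le (bottleneck_nonneg 0 0)

lemma bottleneck_add_le (A A' B B' : Multiset (ℝ × ℝ)) :
    bottleneck (A + A') (B + B') ≤ max (bottleneck A B) (bottleneck A' B') := by
  refine le_of_forall_pos_lt_add fun ε hε => ?_
  obtain ⟨M, hM, hMε⟩ :=
    exists_isDiagMatching_matchingCost_lt (lt_add_of_pos_right (bottleneck A B) hε)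
  obtain ⟨N, hN, hNε⟩ :=
    exists_isDiagMatching_matchingCost_lt (lt_add_of_pos_right (bottleneck A' B') hε)
  calc bottleneck (A + A') (B + B') ≤ matchingCost (M + N) := (hM.add hN).bottleneck_le
    _ = max (matchingCost M) (matchingCost N) := matchingCost_add M N
    _ < max (bottleneck A B) (bottleneck A' B') + ε := by
      rw [← max_add_add_right]
      exact max_lt_max hMε hNε

lemma bottleneck_sum_le {ι : Type*} (s : Finset ι) (A B : ι → Multiset (ℝ × ℝ)) {b : ℝ}
    (hb : 0 ≤ b) (h : ∀ i ∈ s, bottleneck (A i) (B i) ≤ b) :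
    bottleneck (∑ i ∈ s, A i) (∑ i ∈ s, B i) ≤ b := by
  have := Finset.sum_induction (fun i => (A i, B i)) (fun P => bottleneck P.1 P.2 ≤ b)
    (fun P Q hP hQ => (bottleneck_add_le _ _ _ _).trans (max_le hP hQ)) (by simpa using hb) h
  simpa only [Prod.fst_sum, Prod.snd_sum] using this

lemma bottleneck_sum_le_sup' {ι : Type*} {s : Finset ι} (hs : s.Nonempty)
    {A B : ι → Multiset (ℝ × ℝ)} {c : ι → ℝ} (h : ∀ i ∈ s, bottleneck (A i) (B i) ≤ c i) :
    bottleneck (∑ i ∈ s, A i) (∑ i ∈ s, B i) ≤ s.sup' hs c := by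
  obtain ⟨i₀, hi₀⟩ := id hs
  have le_sup' {i : ι} (hi : i ∈ s) : c i ≤ s.sup' hs c := s.le_sup' c hi
  refine bottleneck_sum_le s A B ?_ fun i hi => (h i hi).trans (le_sup' hi)
  exact (bottleneck_nonneg _ _).trans ((h i₀ hi₀).trans (le_sup' hi₀))

theorem bottleneck_stacked_le_general (L : ℕ)
    (A B : Fin L → Multiset (ℝ × ℝ))
    (c : Fin L → ℝ)
    (hbd : ∀ l, bottleneck (A l) (B l) ≤ c l)
    (hne : (Finset.univ : Finset (Fin L)).Nonempty) :
    bottleneck (∑ l, A l) (∑ l, B l) ≤ Finset.univ.sup' hne c ∧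
    bottleneck (∑ l, A l) (∑ l, B l)
      ≤ Finset.univ.sup' hne (fun l => bottleneck (A l) (B l)) :=
  ⟨bottleneck_sum_le_sup' hne fun l _ => hbd l, bottleneck_sum_le_sup' hne fun _ _ => le_rfl⟩

/-- For `L ≥ 1` layers with finite persistence diagrams `A l`, `B l` (points on or above
the diagonal) and per-layer bounds `W∞(A l, B l) ≤ c l` with `c l ≥ 0`, the bottleneck
distance between the stacked persistence diagrams satisfies
`W∞(A₁ + ⋯ + A_L, B₁ + ⋯ + B_L) ≤ max_l c l`; in particular it is at most
`max_l W∞(A l, B l)`. -/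
theorem bottleneck_stacked_le (L : ℕ) (hL : 1 ≤ L)
    (A B : Fin L → Multiset (ℝ × ℝ))
    (hA : ∀ l, ∀ p ∈ A l, p.1 ≤ p.2) (hB : ∀ l, ∀ p ∈ B l, p.1 ≤ p.2)
    (c : Fin L → ℝ) (hc : ∀ l, 0 ≤ c l)
    (hbd : ∀ l, bottleneck (A l) (B l) ≤ c l)
    (hne : (Finset.univ : Finset (Fin L)).Nonempty) :
    bottleneck (∑ l, A l) (∑ l, B l) ≤ Finset.univ.sup' hne c ∧
    bottleneck (∑ l, A l) (∑ l, B l)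
      ≤ Finset.univ.sup' hne (fun l => bottleneck (A l) (B l)) :=
  bottleneck_stacked_le_general L A B c hbd hne
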